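/- For $p \ge 2$ and positive reals $M, \sigma$ with $e^2 \sigma^2 / M^2 \le p$, the function $\Psi_p(M, \sigma^2) = M \cdot \sup\{ (p/s)(\sigma^2/(pM^2))^{1/s} : 2 \le s \le p \}$ satisfies $\Psi_p(M, \sigma^2) \le \frac{p}{e \log(p M^2 / \sigma^2)} M$. -/

import Mathlib

open Real

noncomputable def Psi (p M V : ℝ) : ℝ :=
  M * sSup {y : ℝ | ∃ s : ℝ, 2 ≤ s ∧ s ≤ p ∧ y = p / s * (V / (p * M ^ 2)) ^ (1 / s)}

/-- `(p / s) e^{-L/s}` is maximal at `s = L`, where it equals `p / (e L)`. -/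
lemma div_mul_exp_neg_div_le {p L : ℝ} (hp : 0 ≤ p) (hL : 0 < L) (s : ℝ) :
    p / s * exp (-(L / s)) ≤ p / (exp 1 * L) :=
  calc p / s * exp (-(L / s)) = p / L * (L / s * exp (-(L / s))) := by
        rw [← mul_assoc, div_mul_div_cancel₀ hL.ne']
    _ ≤ p / L * exp (-1) := by gcongr; exact mul_exp_neg_le_exp_neg_one _
    _ = p / (exp 1 * L) := by rw [exp_neg]; field_simp

lemma inv_rpow_one_div_eq_exp {x : ℝ} (hx : 0 < x) (s : ℝ) :
    x⁻¹ ^ (1 / s) = exp (-(log x / s)) := by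
  rw [rpow_def_of_pos (inv_pos.2 hx), log_inv]
  ring_nf

theorem Psi_le_of_one_lt {p M V : ℝ} (hp : 0 ≤ p) (hM : 0 ≤ M) (hx : 1 < p * M ^ 2 / V) :
    Psi p M V ≤ p / (exp 1 * log (p * M ^ 2 / V)) * M := by
  have hL : 0 < log (p * M ^ 2 / V) := log_pos hx
  rw [Psi, mul_comm _ M]
  gcongr
  refine Real.sSup_le ?_ (by positivity)
  rintro y ⟨s, -, -, rfl⟩
  rw [← inv_div (p * M ^ 2), inv_rpow_one_div_eq_exp (by linarith)]
  exact div_mul_exp_neg_div_le hp hL s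

theorem psi_far_out_general (p M σ : ℝ) (hM : 0 < M) (hσ : 0 < σ)
    (h : Real.exp 2 * σ ^ 2 / M ^ 2 ≤ p) :
    Psi p M (σ ^ 2) ≤ p / (Real.exp 1 * Real.log (p * M ^ 2 / σ ^ 2)) * M := by
  have hp : 0 < p := lt_of_lt_of_le (by positivity) h
  have hx : 1 < p * M ^ 2 / σ ^ 2 := by
    rw [div_le_iff₀ (by positivity)] at h
    rw [lt_div_iff₀ (by positivity)]
    nlinarith [one_lt_exp_iff.2 two_pos, pow_pos hσ 2]
  exact Psi_le_of_one_lt hp.le hM.le hx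

theorem psi_far_out (p M σ : ℝ) (hp : 2 ≤ p) (hM : 0 < M) (hσ : 0 < σ)
    (h : Real.exp 2 * σ ^ 2 / M ^ 2 ≤ p) :
    Psi p M (σ ^ 2) ≤ p / (Real.exp 1 * Real.log (p * M ^ 2 / σ ^ 2)) * M :=
  psi_far_out_general p M σ hM hσ h
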